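/- Let n, m, k, r be positive integers, S_1,…,S_r ∈ ℝ^{n×n}, X ∈ ℝ^{n×m}, E ∈ ℝ^{m×m}, P ∈ ℝ^{n²×r} with ℓ-th column vec(S_ℓ), U = [((XE^{k−1})ᵀ ⊗ I_n)P, …, (Xᵀ ⊗ I_n)P] ∈ ℝ^{mn×kr}, b = vec(−XE^k), and let U† be a Moore–Penrose pseudoinverse of U with U(U†b) = b. Then for every y ∈ ℝ^{kr}, setting x = U†b + (I_{kr} − U†U)y, letting α_i ∈ ℝ^r be the block of x occupying positions corresponding to block index k−1−i (for i = 0,…,k−1), and A_i = Σ_{ℓ=1}^r α_i(ℓ) S_ℓ, the matrices A_0,…,A_{k−1} satisfy X E^k + Σ_{i=0}^{k−1} A_i X E^i = 0. -/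

import Mathlib

/-!
Since `U U† U = U`, the vector `(I - U†U) y` lies in the kernel of `U`, so `U x = U U† b = b`.
By `(Bᵀ ⊗ I) vec S = vec (S B)`, the `p`-th column block of `U` sends a coefficient vector `c`
to `vec ((∑ ℓ, c ℓ • S ℓ) * X * E ^ (k - 1 - p))`; hence `U x = vec (∑ i, A i * X * E ^ i)`, and
`U x = b = vec (-(X * E ^ k))` is the claim because `vec` is injective.
-/

open Matrix
open scoped Kronecker

/-- Column-stacking vectorization: `vecc C (j, i) = C i j`. -/
def vecc {n m : ℕ} (C : Matrix (Fin n) (Fin m) ℝ) : Fin m × Fin n → ℝ :=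
  fun ji => C ji.2 ji.1

namespace Matrix

variable {R ι κ m n ρ : Type*} [Fintype ι] [Fintype κ]

theorem mulVec_one_sub_mul_mulVec_eq_zero [Ring R] [Fintype m] [Fintype n] [DecidableEq n]
    {U : Matrix m n R} {G : Matrix n m R} (hUGU : U * G * U = U) (y : n → R) :
    U *ᵥ ((1 - G * U) *ᵥ y) = 0 := by
  rw [mulVec_mulVec, Matrix.mul_sub, Matrix.mul_one, ← Matrix.mul_assoc, hUGU, sub_self,
    zero_mulVec]

theorem mulVec_eq_sum_mulVec_of_apply_eq [NonUnitalNonAssocSemiring R]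
    {U : Matrix ρ (ι × κ) R} {B : ι → Matrix ρ κ R} (hU : ∀ row col, U row col = B col.1 row col.2)
    (x : ι × κ → R) : U *ᵥ x = ∑ p, B p *ᵥ fun ℓ => x (p, ℓ) := by
  ext row
  simp only [mulVec, dotProduct, Finset.sum_apply, hU, Fintype.sum_prod_type]

theorem mulVec_eq_vec_sum_smul [CommSemiring R] [Fintype m] [Fintype n]
    {P : Matrix (n × m) κ R} {S : κ → Matrix m n R} (hP : ∀ ℓ, (fun ji => P ji ℓ) = vec (S ℓ))
    (c : κ → R) : P *ᵥ c = vec (∑ ℓ, c ℓ • S ℓ) := by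
  ext ji
  simp only [mulVec, dotProduct, vec_sum, vec_smul, Finset.sum_apply, Pi.smul_apply, smul_eq_mul,
    ← congrFun (hP _) ji, mul_comm]

theorem kronecker_one_mul_mulVec_eq_vec [CommSemiring R] [Fintype m] [Fintype n] [DecidableEq n]
    {P : Matrix (m × n) κ R} {S : κ → Matrix n m R} (hP : ∀ ℓ, (fun ji => P ji ℓ) = vec (S ℓ))
    (M : Matrix m ρ R) (c : κ → R) :
    (Mᵀ ⊗ₖ (1 : Matrix n n R) * P) *ᵥ c = vec ((∑ ℓ, c ℓ • S ℓ) * M) := by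
  rw [← mulVec_mulVec, mulVec_eq_vec_sum_smul hP, kronecker_mulVec_vec, transpose_transpose,
    Matrix.one_mul]

theorem mulVec_eq_vec_sum_mul_of_apply_eq [CommSemiring R] [Fintype m] [Fintype n] [DecidableEq n]
    {P : Matrix (m × n) κ R} {S : κ → Matrix n m R} (hP : ∀ ℓ, (fun ji => P ji ℓ) = vec (S ℓ))
    {M : ι → Matrix m ρ R} {U : Matrix (ρ × n) (ι × κ) R}
    (hU : ∀ row col, U row col = ((M col.1)ᵀ ⊗ₖ (1 : Matrix n n R) * P) row col.2)
    (x : ι × κ → R) : U *ᵥ x = vec (∑ p, (∑ ℓ, x (p, ℓ) • S ℓ) * M p) := by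
  simp only [mulVec_eq_sum_mulVec_of_apply_eq (B := fun p => (M p)ᵀ ⊗ₖ 1 * P) hU,
    kronecker_one_mul_mulVec_eq_vec hP, vec_sum]

end Matrix

theorem vecc_eq_vec {n m : ℕ} (C : Matrix (Fin n) (Fin m) ℝ) : vecc C = C.vec := rfl

theorem stmt_6_general (n m k r : ℕ)
    (S : Fin r → Matrix (Fin n) (Fin n) ℝ)
    (X : Matrix (Fin n) (Fin m) ℝ) (E : Matrix (Fin m) (Fin m) ℝ)
    (P : Matrix (Fin n × Fin n) (Fin r) ℝ)
    (hP : ∀ ℓ : Fin r, (fun ji => P ji ℓ) = vecc (S ℓ))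
    (U : Matrix (Fin m × Fin n) (Fin k × Fin r) ℝ)
    (hU : ∀ row col, U row col =
      (((X * E ^ (k - 1 - (col.1 : ℕ)))ᵀ ⊗ₖ (1 : Matrix (Fin n) (Fin n) ℝ)) * P) row col.2)
    (b : Fin m × Fin n → ℝ)
    (hb : b = vecc (-(X * E ^ k)))
    (Ud : Matrix (Fin k × Fin r) (Fin m × Fin n) ℝ)
    (hd1 : U * Ud * U = U)
    (hsolv : U.mulVec (Ud.mulVec b) = b)
    (y : Fin k × Fin r → ℝ)
    (x : Fin k × Fin r → ℝ)
    (hx : x = Ud.mulVec b + ((1 : Matrix (Fin k × Fin r) (Fin k × Fin r) ℝ) - Ud * U).mulVec y)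
    (α : Fin k → Fin r → ℝ)
    (hα : ∀ (i : Fin k) (ℓ : Fin r), α i ℓ = x (Fin.rev i, ℓ))
    (A : Fin k → Matrix (Fin n) (Fin n) ℝ)
    (hA : ∀ i : Fin k, A i = ∑ ℓ : Fin r, α i ℓ • S ℓ) :
    X * E ^ k + ∑ i : Fin k, A i * X * E ^ (i : ℕ) = 0 := by
  have hUx : U *ᵥ x = b := by
    rw [hx, mulVec_add, hsolv, mulVec_one_sub_mul_mulVec_eq_zero hd1, add_zero]
  rw [mulVec_eq_vec_sum_mul_of_apply_eq (M := fun p : Fin k => X * E ^ (k - 1 - (p : ℕ))) hP hU,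
    hb, vecc_eq_vec, vec_inj, ← Equiv.sum_comp Fin.revPerm] at hUx
  have hterm (i : Fin k) :
      (∑ ℓ, x (Fin.rev i, ℓ) • S ℓ) * (X * E ^ (k - 1 - (Fin.rev i : ℕ))) =
        A i * X * E ^ (i : ℕ) := by
    rw [hA, Matrix.mul_assoc, Fin.val_rev]
    simp only [hα]
    congr 3
    omega
  simp only [Fin.revPerm_apply, hterm] at hUx
  rw [hUx, add_neg_cancel]

theorem stmt_6 (n m k r : ℕ) (hn : 0 < n) (hm : 0 < m) (hk : 0 < k) (hr : 0 < r)
    (S : Fin r → Matrix (Fin n) (Fin n) ℝ)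
    (X : Matrix (Fin n) (Fin m) ℝ) (E : Matrix (Fin m) (Fin m) ℝ)
    (P : Matrix (Fin n × Fin n) (Fin r) ℝ)
    (hP : ∀ ℓ : Fin r, (fun ji => P ji ℓ) = vecc (S ℓ))
    (U : Matrix (Fin m × Fin n) (Fin k × Fin r) ℝ)
    (hU : ∀ row col, U row col =
      (((X * E ^ (k - 1 - (col.1 : ℕ)))ᵀ ⊗ₖ (1 : Matrix (Fin n) (Fin n) ℝ)) * P) row col.2)
    (b : Fin m × Fin n → ℝ)
    (hb : b = vecc (-(X * E ^ k)))
    (Ud : Matrix (Fin k × Fin r) (Fin m × Fin n) ℝ)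
    (hd1 : U * Ud * U = U) (hd2 : Ud * U * Ud = Ud)
    (hd3 : (U * Ud)ᵀ = U * Ud) (hd4 : (Ud * U)ᵀ = Ud * U)
    (hsolv : U.mulVec (Ud.mulVec b) = b)
    (y : Fin k × Fin r → ℝ)
    (x : Fin k × Fin r → ℝ)
    (hx : x = Ud.mulVec b + ((1 : Matrix (Fin k × Fin r) (Fin k × Fin r) ℝ) - Ud * U).mulVec y)
    (α : Fin k → Fin r → ℝ)
    (hα : ∀ (i : Fin k) (ℓ : Fin r), α i ℓ = x (Fin.rev i, ℓ))
    (A : Fin k → Matrix (Fin n) (Fin n) ℝ)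
    (hA : ∀ i : Fin k, A i = ∑ ℓ : Fin r, α i ℓ • S ℓ) :
    X * E ^ k + ∑ i : Fin k, A i * X * E ^ (i : ℕ) = 0 :=
  stmt_6_general n m k r S X E P hP U hU b hb Ud hd1 hsolv y x hx α hα A hA
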